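/- arXiv:2603.28694 — 4 statements merged into one kernel-verified Lean document; each statement's English description precedes it below -/
import Mathlib

section
/- (Kochen–Stone Lemma) Let (Ω, ν) be a finite measure space and {A_n} a sequence of measurable subsets of Ω such that ∑_{n≥1} ν(A_n) = +∞ and liminf_{N→∞} ( ∑_{n,m=1}^{N} ν(A_n ∩ A_m) ) / ( ∑_{n=1}^{N} ν(A_n) )² < +∞. Then ν( limsup_n A_n ) > 0, i.e. the set of points of Ω contained in infinitely many of the A_n has positive measure. -/
/-!
For a finite family, the counting function `g = ∑ 1_{A n}` vanishes off `⋃ A n`, so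
Cauchy–Schwarz gives `(∑ ν(A n))² = (∫ g)² ≤ (∫ g²) ν(⋃ A n) = (∑∑ ν(A n ∩ A m)) ν(⋃ A n)`.
Apply this to the tail `k ≤ n < N`: as the partial sums diverge, for large `N` the tail is at
least half the partial sum, so along the `N` where the ratio in the hypothesis is below a
fixed finite `C` we get `ν(⋃_{n ≥ k} A n) ≥ (4C)⁻¹` for every `k`. Since `ν` is finite,
continuity from above carries this bound over to `limsup A`.
-/

open MeasureTheory Filter

open scoped ENNReal Topology

theorem ENNReal.inv_four_mul_le_of_sq_le_mul {s a t C μ : ℝ≥0∞} (hs₀ : s ≠ 0) (hs : s ≠ ∞)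
    (hsa : s ≤ 2 * a) (ha : a ^ 2 ≤ t * μ) (ht : t / s ^ 2 < C) : (4 * C)⁻¹ ≤ μ := by
  have hs2₀ : s ^ 2 ≠ 0 := pow_ne_zero 2 hs₀
  have hs2 : s ^ 2 ≠ ∞ := ENNReal.pow_ne_top hs
  have htC : t ≤ C * s ^ 2 := ((ENNReal.div_lt_iff (.inl hs2₀) (.inl hs2)).1 ht).le
  have h : 1 ≤ 4 * C * μ := by
    rw [← ENNReal.mul_le_mul_iff_right hs2₀ hs2, mul_one]
    calc s ^ 2 ≤ (2 * a) ^ 2 := by gcongr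
      _ = 4 * a ^ 2 := by ring
      _ ≤ 4 * (C * s ^ 2 * μ) := by gcongr; exact ha.trans (by gcongr)
      _ = s ^ 2 * (4 * C * μ) := by ring
  have h₀ : 4 * C * μ ≠ 0 := (zero_lt_one.trans_le h).ne'
  exact (ENNReal.inv_le_iff_le_mul (fun _ => left_ne_zero_of_mul h₀)
    fun _ => right_ne_zero_of_mul h₀).2 h

namespace MeasureTheory

variable {Ω ι : Type*} [MeasurableSpace Ω] {ν : Measure Ω}

theorem sq_lintegral_le_lintegral_sq_mul_measure_univ {g : Ω → ℝ≥0∞} (hg : AEMeasurable g ν) :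
    (∫⁻ x, g x ∂ν) ^ 2 ≤ (∫⁻ x, g x ^ 2 ∂ν) * ν Set.univ := by
  have h := ENNReal.lintegral_mul_le_Lp_mul_Lq ν Real.HolderConjugate.two_two hg
    (aemeasurable_const (b := 1))
  simp only [Pi.mul_apply, mul_one, lintegral_const, ENNReal.rpow_two] at h
  calc (∫⁻ x, g x ∂ν) ^ 2
      ≤ ((∫⁻ x, g x ^ 2 ∂ν) ^ (2⁻¹ : ℝ) * ν Set.univ ^ (2⁻¹ : ℝ)) ^ (2 : ℝ) := by
        rw [← ENNReal.rpow_two]; gcongr; simpa [one_div] using h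
    _ = (∫⁻ x, g x ^ 2 ∂ν) * ν Set.univ := by
        rw [ENNReal.mul_rpow_of_nonneg _ _ zero_le_two, ← ENNReal.rpow_mul, ← ENNReal.rpow_mul]
        norm_num

theorem lintegral_sum_indicator_one {A : ι → Set Ω} (hA : ∀ n, MeasurableSet (A n))
    (s : Finset ι) :
    ∫⁻ x, ∑ n ∈ s, (A n).indicator 1 x ∂ν = ∑ n ∈ s, ν (A n) := by
  rw [lintegral_finsetSum _ fun n _ => measurable_one.indicator (hA n)]
  exact Finset.sum_congr rfl fun n _ => lintegral_indicator_one (hA n)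

theorem lintegral_sq_sum_indicator_one {A : ι → Set Ω} (hA : ∀ n, MeasurableSet (A n))
    (s : Finset ι) :
    ∫⁻ x, (∑ n ∈ s, (A n).indicator 1 x) ^ 2 ∂ν = ∑ n ∈ s, ∑ m ∈ s, ν (A n ∩ A m) := by
  have hsq (x : Ω) : (∑ n ∈ s, (A n).indicator 1 x) ^ 2
      = ∑ n ∈ s, ∑ m ∈ s, (A n ∩ A m).indicator (1 : Ω → ℝ≥0∞) x := by
    simp only [sq, Finset.sum_mul_sum, Set.inter_indicator_one, Pi.mul_apply]
  simp_rw [hsq]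
  rw [lintegral_finsetSum _ fun n _ => Finset.measurable_sum _ fun m _ =>
    measurable_one.indicator ((hA n).inter (hA m))]
  exact Finset.sum_congr rfl fun n _ =>
    lintegral_sum_indicator_one (fun m => (hA n).inter (hA m)) s

theorem sq_sum_measure_le_sum_measure_inter_mul_measure_biUnion {A : ι → Set Ω}
    (hA : ∀ n, MeasurableSet (A n)) (s : Finset ι) :
    (∑ n ∈ s, ν (A n)) ^ 2 ≤ (∑ n ∈ s, ∑ m ∈ s, ν (A n ∩ A m)) * ν (⋃ n ∈ s, A n) := by
  set g : Ω → ℝ≥0∞ := fun x => ∑ n ∈ s, (A n).indicator 1 x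
  have hg : Measurable g := Finset.measurable_sum _ fun n _ => measurable_one.indicator (hA n)
  have hsupp : g.support ⊆ ⋃ n ∈ s, A n :=
    (Finset.support_sum s _).trans
      (Set.biUnion_mono subset_rfl fun n _ => Set.support_indicator_subset)
  calc (∑ n ∈ s, ν (A n)) ^ 2 = (∫⁻ x in ⋃ n ∈ s, A n, g x ∂ν) ^ 2 := by
        rw [setLIntegral_eq_of_support_subset hsupp, lintegral_sum_indicator_one hA]
    _ ≤ (∫⁻ x in ⋃ n ∈ s, A n, g x ^ 2 ∂ν) * ν (⋃ n ∈ s, A n) := by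
        simpa using sq_lintegral_le_lintegral_sq_mul_measure_univ (ν := ν.restrict _)
          hg.aemeasurable
    _ ≤ (∑ n ∈ s, ∑ m ∈ s, ν (A n ∩ A m)) * ν (⋃ n ∈ s, A n) := by
        rw [← lintegral_sq_sum_indicator_one hA]
        gcongr ?_ * _
        exact setLIntegral_le_lintegral _ _

theorem measure_limsup_atTop_eq_iInf [IsFiniteMeasure ν] {A : ℕ → Set Ω}
    (hA : ∀ n, MeasurableSet (A n)) :
    ν (limsup A atTop) = ⨅ k, ν (⋃ n ≥ k, A n) := by
  rw [limsup_eq_iInf_iSup_of_nat]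
  refine Antitone.measure_iInter (fun i j hij => Set.biUnion_mono (fun n hn => hij.trans hn)
    fun _ _ => subset_rfl) (fun k => ?_) ⟨0, measure_ne_top ν _⟩
  exact (MeasurableSet.biUnion (Set.to_countable _) fun n _ => hA n).nullMeasurableSet

theorem inv_four_mul_le_measure_iUnion_ge [IsFiniteMeasure ν] {A : ℕ → Set Ω}
    (hA : ∀ n, MeasurableSet (A n))
    (hdiv : Tendsto (fun N => ∑ n ∈ Finset.range N, ν (A n)) atTop (𝓝 ∞)) {C : ℝ≥0∞}
    (hC : ∃ᶠ N in atTop, (∑ n ∈ Finset.range N, ∑ m ∈ Finset.range N, ν (A n ∩ A m)) /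
      (∑ n ∈ Finset.range N, ν (A n)) ^ 2 < C) (k : ℕ) :
    (4 * C)⁻¹ ≤ ν (⋃ n ≥ k, A n) := by
  have hfin (s : Finset ℕ) : ∑ n ∈ s, ν (A n) ≠ ∞ :=
    ENNReal.sum_ne_top.2 fun n _ => measure_ne_top ν _
  have h2Sk : 2 * ∑ n ∈ Finset.range k, ν (A n) < ∞ :=
    ENNReal.mul_lt_top ENNReal.ofNat_lt_top (hfin _).lt_top
  obtain ⟨N, hN, hSN, hkN⟩ := (hC.and_eventually
    ((hdiv.eventually_const_lt h2Sk).and (eventually_ge_atTop k))).exists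
  have hsplit := Finset.sum_range_add_sum_Ico (fun n => ν (A n)) hkN
  rw [← hsplit, two_mul, ENNReal.add_lt_add_iff_left (hfin _)] at hSN
  have hS₀ : ∑ n ∈ Finset.range N, ν (A n) ≠ 0 := by
    rw [← hsplit]; exact (hSN.trans_le' zero_le).trans_le le_add_self |>.ne'
  have hS_le : ∑ n ∈ Finset.range N, ν (A n) ≤ 2 * ∑ n ∈ Finset.Ico k N, ν (A n) := by
    rw [← hsplit, two_mul]; gcongr
  have hIco : Finset.Ico k N ⊆ Finset.range N :=
    fun n hn => Finset.mem_range.2 (Finset.mem_Ico.1 hn).2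
  refine ENNReal.inv_four_mul_le_of_sq_le_mul hS₀ (hfin _) hS_le ?_ hN
  calc (∑ n ∈ Finset.Ico k N, ν (A n)) ^ 2
      ≤ (∑ n ∈ Finset.Ico k N, ∑ m ∈ Finset.Ico k N, ν (A n ∩ A m)) *
          ν (⋃ n ∈ Finset.Ico k N, A n) :=
        sq_sum_measure_le_sum_measure_inter_mul_measure_biUnion hA _
    _ ≤ (∑ n ∈ Finset.range N, ∑ m ∈ Finset.range N, ν (A n ∩ A m)) * ν (⋃ n ≥ k, A n) := by
        gcongr ?_ * ν ?_
        · exact (Finset.sum_le_sum fun n _ => Finset.sum_le_sum_of_subset hIco).trans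
            (Finset.sum_le_sum_of_subset hIco)
        · exact Set.iUnion₂_mono' fun n hn => ⟨n, (Finset.mem_Ico.1 hn).1, subset_rfl⟩

end MeasureTheory

/-- Kochen–Stone Lemma: if `∑ ν(A n) = ∞` and the liminf of
`(∑_{n,m<N} ν(A n ∩ A m)) / (∑_{n<N} ν(A n))²` is finite, then the set of points
lying in infinitely many `A n` has positive measure. -/
theorem stmt_2 {Ω : Type*} [MeasurableSpace Ω] (ν : Measure Ω)
    [IsFiniteMeasure ν] (A : ℕ → Set Ω) (hA : ∀ n, MeasurableSet (A n))
    (hdiv : ∑' n, ν (A n) = ⊤)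
    (hliminf : liminf (fun N =>
      (∑ n ∈ Finset.range N, ∑ m ∈ Finset.range N, ν (A n ∩ A m)) /
        (∑ n ∈ Finset.range N, ν (A n)) ^ 2) atTop < ⊤) :
    0 < ν (limsup A atTop) := by
  obtain ⟨C, hC_gt, hC⟩ := exists_between hliminf
  have hS : Tendsto (fun N => ∑ n ∈ Finset.range N, ν (A n)) atTop (𝓝 ∞) :=
    hdiv ▸ ENNReal.tendsto_nat_tsum _
  have hbound := inv_four_mul_le_measure_iUnion_ge hA hS (frequently_lt_of_liminf_lt (h := hC_gt))
  calc 0 < (4 * C)⁻¹ := ENNReal.inv_pos.2 (ENNReal.mul_ne_top (by simp) hC.ne)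
    _ ≤ ν (limsup A atTop) := by
        rw [measure_limsup_atTop_eq_iInf hA]
        exact le_iInf hbound
end

section
/- Let Γ be a countable group acting by isometries on a metric space (Ω, d), let o ∈ Ω, and let δ > 0 be such that M_p := ∑_{γ ∈ Γ} exp(−δ · d(p, γ·o)) is finite for every p ∈ Ω. For p ∈ Ω define the probability measure ν_p on Γ by ν_p({γ}) = exp(−δ·d(p, γ·o)) / M_p. Then for all p, q ∈ Ω with d(p,q) ≤ 1, the total variation distance satisfies ‖ν_p − ν_q‖ := ∑_{γ ∈ Γ} |ν_p({γ}) − ν_q({γ})| ≤ 2δ·e^{2δ}·d(p,q). -/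
/-!
Write `f γ = e^{-δ d(p, γo)}` and `g γ = e^{-δ d(q, γo)}`. By the triangle inequality the
exponents differ by at most `δ d(p,q)`, so `|f γ - g γ| ≤ ε f γ` with `ε = δ e^{δ} d(p,q)`.
Summing, the total masses `A = ∑ f` and `B = ∑ g` also differ by at most `ε A`, and
`|f/A - g/B| ≤ |f - g|/A + g |B - A|/(A B)` then sums to at most `2ε`.
-/

open Real

lemma Real.abs_exp_sub_one_le_mul_exp_abs (u : ℝ) : |exp u - 1| ≤ |u| * exp |u| := by
  rcases le_or_gt 0 u with hu | hu
  · rw [abs_of_nonneg hu, abs_of_nonneg (by linarith [one_le_exp hu])]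
    have h_inv : exp (-u) * exp u = 1 := by rw [← exp_add, neg_add_cancel, exp_zero]
    nlinarith [add_one_le_exp (-u), exp_pos u]
  · rw [abs_of_neg hu, abs_of_nonpos (by linarith [exp_lt_one_iff.2 hu])]
    nlinarith [add_one_le_exp u, one_le_exp (neg_nonneg.2 hu.le)]

lemma Real.abs_exp_sub_exp_le (x y : ℝ) :
    |exp x - exp y| ≤ exp x * (|x - y| * exp |x - y|) := by
  have h := abs_exp_sub_one_le_mul_exp_abs (y - x)
  rw [abs_sub_comm y x] at h
  calc |exp x - exp y| = exp x * |exp (y - x) - 1| := by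
        rw [← abs_of_pos (exp_pos x), ← abs_mul, abs_of_pos (exp_pos x), mul_sub, ← exp_add,
          add_sub_cancel, mul_one, abs_sub_comm]
    _ ≤ exp x * (|x - y| * exp |x - y|) := mul_le_mul_of_nonneg_left h (exp_pos x).le

lemma abs_exp_neg_mul_dist_sub_le {α : Type*} [PseudoMetricSpace α] {δ : ℝ} (hδ : 0 ≤ δ)
    {p q : α} (hpq : dist p q ≤ 1) (x : α) :
    |exp (-δ * dist p x) - exp (-δ * dist q x)| ≤
      δ * exp δ * dist p q * exp (-δ * dist p x) := by
  have h_exponent : |-δ * dist p x - -δ * dist q x| ≤ δ * dist p q := by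
    rw [← mul_sub, abs_mul, abs_neg, abs_of_nonneg hδ]
    exact mul_le_mul_of_nonneg_left (abs_dist_sub_le p q x) hδ
  have h_small : δ * dist p q ≤ δ := mul_le_of_le_one_right hδ hpq
  calc _ ≤ exp (-δ * dist p x) * (δ * dist p q * exp (δ * dist p q)) :=
        (abs_exp_sub_exp_le _ _).trans <| mul_le_mul_of_nonneg_left
          (mul_le_mul h_exponent (exp_le_exp.2 h_exponent) (exp_pos _).le (by positivity))
          (exp_pos _).le
    _ ≤ exp (-δ * dist p x) * (δ * dist p q * exp δ) := by gcongr
    _ = δ * exp δ * dist p q * exp (-δ * dist p x) := by ring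

section Normalize

variable {ι : Type*} {f g : ι → ℝ}

lemma tsum_abs_div_tsum_sub_div_tsum_le (hf : Summable f) (hg : Summable g)
    (hg0 : ∀ i, 0 ≤ g i) (hA : 0 < ∑' i, f i) (hB : 0 < ∑' i, g i) :
    ∑' i, |f i / ∑' j, f j - g i / ∑' j, g j| ≤ 2 * (∑' i, |f i - g i|) / ∑' i, f i := by
  set A := ∑' i, f i
  set B := ∑' i, g i
  have h_abs : Summable fun i => |f i - g i| := (hf.sub hg).abs
  have h_mass : |B - A| ≤ ∑' i, |f i - g i| := by
    rw [abs_sub_comm, ← hf.tsum_sub hg]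
    exact norm_tsum_le_tsum_norm (f := fun i => f i - g i) h_abs
  have h_pointwise : ∀ i, |f i / A - g i / B| ≤ |f i - g i| / A + g i / B * (|B - A| / A) := by
    intro i
    have h_split : f i / A - g i / B = (f i - g i) / A + g i / B * ((B - A) / A) := by
      field_simp; ring
    rw [h_split]
    refine (abs_add_le _ _).trans_eq ?_
    rw [abs_mul, abs_of_nonneg (div_nonneg (hg0 i) hB.le), abs_div, abs_div, abs_of_pos hA]
  have h_g_div : Summable fun i => g i / B := hg.div_const B
  calc ∑' i, |f i / A - g i / B|
      ≤ ∑' i, (|f i - g i| / A + g i / B * (|B - A| / A)) :=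
        ((hf.div_const A).sub h_g_div).abs.tsum_le_tsum h_pointwise
          ((h_abs.div_const A).add (h_g_div.mul_right _))
    _ = (∑' i, |f i - g i|) / A + |B - A| / A := by
        rw [(h_abs.div_const A).tsum_add (h_g_div.mul_right _), tsum_div_const, tsum_mul_right,
          tsum_div_const, div_self hB.ne', one_mul]
    _ ≤ 2 * (∑' i, |f i - g i|) / A := by
        rw [two_mul, add_div]; gcongr

lemma tsum_abs_div_tsum_sub_div_tsum_le_of_abs_sub_le (hf : Summable f) (hg : Summable g)
    (hg0 : ∀ i, 0 ≤ g i) (hA : 0 < ∑' i, f i) (hB : 0 < ∑' i, g i) {ε : ℝ}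
    (hfg : ∀ i, |f i - g i| ≤ ε * f i) :
    ∑' i, |f i / ∑' j, f j - g i / ∑' j, g j| ≤ 2 * ε := by
  have h_total : ∑' i, |f i - g i| ≤ ε * ∑' i, f i := by
    rw [← tsum_mul_left]
    exact (hf.sub hg).abs.tsum_le_tsum hfg (hf.mul_left ε)
  calc _ ≤ 2 * (∑' i, |f i - g i|) / ∑' i, f i :=
        tsum_abs_div_tsum_sub_div_tsum_le hf hg hg0 hA hB
    _ ≤ 2 * (ε * ∑' i, f i) / ∑' i, f i := by gcongr
    _ = 2 * ε := by field_simp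

end Normalize

theorem stmt_5_general {Ω Γ : Type*} [MetricSpace Ω] [Group Γ]
    [MulAction Γ Ω]
    (o : Ω) (δ : ℝ) (hδ : 0 < δ)
    (hsum : ∀ p : Ω, Summable fun γ : Γ => Real.exp (-δ * dist p (γ • o)))
    (p q : Ω) (hpq : dist p q ≤ 1) :
    (∑' γ : Γ,
      |Real.exp (-δ * dist p (γ • o)) / (∑' γ' : Γ, Real.exp (-δ * dist p (γ' • o))) -
       Real.exp (-δ * dist q (γ • o)) / (∑' γ' : Γ, Real.exp (-δ * dist q (γ' • o)))|)
      ≤ 2 * δ * Real.exp (2 * δ) * dist p q := by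
  have h_mass_pos : ∀ x : Ω, 0 < ∑' γ : Γ, exp (-δ * dist x (γ • o)) := fun x =>
    (hsum x).tsum_pos (fun _ => (exp_pos _).le) 1 (exp_pos _)
  calc _ ≤ 2 * (δ * exp δ * dist p q) :=
        tsum_abs_div_tsum_sub_div_tsum_le_of_abs_sub_le (hsum p) (hsum q)
          (fun _ => (exp_pos _).le) (h_mass_pos p) (h_mass_pos q) fun γ => abs_exp_neg_mul_dist_sub_le hδ.le hpq (γ • o)
    _ = 2 * δ * exp δ * dist p q := by ring
    _ ≤ 2 * δ * exp (2 * δ) * dist p q := by gcongr; linarith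

/-- Lipschitz estimate for normalized exponentially weighted orbit measures: if
`ν_p(γ) = e^{-δ d(p, γ o)} / M_p`, then for `d(p,q) ≤ 1` the total variation distance
satisfies `‖ν_p - ν_q‖ ≤ 2δ e^{2δ} d(p,q)`. -/
theorem stmt_5 {Ω Γ : Type*} [MetricSpace Ω] [Group Γ] [Countable Γ]
    [MulAction Γ Ω] (hiso : ∀ γ : Γ, Isometry (fun ω : Ω => γ • ω))
    (o : Ω) (δ : ℝ) (hδ : 0 < δ)
    (hsum : ∀ p : Ω, Summable fun γ : Γ => Real.exp (-δ * dist p (γ • o)))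
    (p q : Ω) (hpq : dist p q ≤ 1) :
    (∑' γ : Γ,
      |Real.exp (-δ * dist p (γ • o)) / (∑' γ' : Γ, Real.exp (-δ * dist p (γ' • o))) -
       Real.exp (-δ * dist q (γ • o)) / (∑' γ' : Γ, Real.exp (-δ * dist q (γ' • o)))|)
      ≤ 2 * δ * Real.exp (2 * δ) * dist p q :=
  stmt_5_general o δ hδ hsum p q hpq
end

section
/- Let V be a finite-dimensional real vector space, let ν be a Borel probability measure on the projective space ℙ(V), and let T_n → T in End(V) with T ≠ 0. Suppose ν(ℙ(ker T)) = 0. Define the pushforward T_*ν as the pushforward under the induced map [v] ↦ [T v] of the restriction of ν to ℙ(V) ∖ ℙ(ker T) (and similarly for T_n, restricting away from ℙ(ker T_n)). Then (T_n)_*ν → T_*ν weakly (i.e., ∫ f d(T_n)_*ν → ∫ f dT_*ν for every continuous f : ℙ(V) → ℝ). -/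
open MeasureTheory Filter Classical
open scoped LinearAlgebra.Projectivization

noncomputable section

variable {V : Type*} [NormedAddCommGroup V] [NormedSpace ℝ V]

/-- The quotient topology on the projective space `ℙ ℝ V`. -/
instance projTop : TopologicalSpace (ℙ ℝ V) := instTopologicalSpaceQuotient

/-- The Borel σ-algebra on the projective space `ℙ ℝ V`. -/
instance projMeas : MeasurableSpace (ℙ ℝ V) := borel _

instance projBorel : BorelSpace (ℙ ℝ V) := ⟨rfl⟩

/-- The map induced on `ℙ(V)` by an endomorphism `T`: it sends `[v]` to `[T v]` when
`T v ≠ 0`, and is defined arbitrarily (as the identity) on `ℙ(ker T)`. -/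
def projMap (T : V →L[ℝ] V) (x : ℙ ℝ V) : ℙ ℝ V :=
  if h : T x.rep ≠ 0 then Projectivization.mk ℝ (T x.rep) h else x

lemma q_quotientMap :
    Topology.IsQuotientMap (Projectivization.mk' ℝ : {v : V // v ≠ 0} → ℙ ℝ V) :=
  isQuotientMap_quotient_mk'

lemma q_continuous : Continuous (Projectivization.mk' ℝ : {v : V // v ≠ 0} → ℙ ℝ V) :=
  continuous_quotient_mk'

lemma rep_zero_iff (S : V →L[ℝ] V) (v : V) (hv : v ≠ 0) :
    S ((Projectivization.mk ℝ v hv).rep) = 0 ↔ S v = 0 := by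
  obtain ⟨a, ha⟩ := Projectivization.exists_smul_eq_mk_rep ℝ v hv
  rw [← ha]
  simp [Units.smul_def, Units.ne_zero]

lemma projMap_mk (S : V →L[ℝ] V) (v : V) (hv : v ≠ 0) (h : S v ≠ 0) :
    projMap S (Projectivization.mk ℝ v hv) = Projectivization.mk ℝ (S v) h := by
  have h' : S ((Projectivization.mk ℝ v hv).rep) ≠ 0 := fun h0 => h ((rep_zero_iff S v hv).1 h0)
  rw [projMap, dif_pos h']
  obtain ⟨a, ha⟩ := Projectivization.exists_smul_eq_mk_rep ℝ v hv
  refine (Projectivization.mk_eq_mk_iff ℝ _ _ _ _).2 ⟨a, ?_⟩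
  rw [← ha]
  simp [Units.smul_def]

lemma isOpen_U (S : V →L[ℝ] V) : IsOpen {x : ℙ ℝ V | S x.rep ≠ 0} := by
  rw [← q_quotientMap.isOpen_preimage]
  have : (Projectivization.mk' ℝ : {v : V // v ≠ 0} → ℙ ℝ V) ⁻¹' {x : ℙ ℝ V | S x.rep ≠ 0}
      = Subtype.val ⁻¹' (S ⁻¹' {0}ᶜ) := by
    ext v
    simpa using not_congr (rep_zero_iff S v.1 v.2)
  rw [this]
  exact (isOpen_compl_singleton.preimage S.continuous).preimage continuous_subtype_val

lemma continuousOn_projMap (S : V →L[ℝ] V) :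
    ContinuousOn (projMap S) {x : ℙ ℝ V | S x.rep ≠ 0} := by
  rw [continuousOn_open_iff (isOpen_U S)]
  intro W hW
  rw [← q_quotientMap.isOpen_preimage]
  have hqW : IsOpen ((Projectivization.mk' ℝ : {v : V // v ≠ 0} → ℙ ℝ V) ⁻¹' W) :=
    hW.preimage q_continuous
  rw [isOpen_induced_iff] at hqW
  obtain ⟨O, hO, hOeq⟩ := hqW
  have : (Projectivization.mk' ℝ : {v : V // v ≠ 0} → ℙ ℝ V) ⁻¹'
      ({x : ℙ ℝ V | S x.rep ≠ 0} ∩ projMap S ⁻¹' W)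
      = Subtype.val ⁻¹' (S ⁻¹' ({0}ᶜ ∩ O)) := by
    ext v
    simp only [Set.mem_preimage, Set.mem_inter_iff, Set.mem_setOf_eq, Set.mem_compl_iff,
      Set.mem_singleton_iff, Projectivization.mk'_eq_mk]
    constructor
    · rintro ⟨h1, h2⟩
      have h1' : S v.1 ≠ 0 := fun h0 => h1 ((rep_zero_iff S v.1 v.2).2 h0)
      refine ⟨h1', ?_⟩
      have : projMap S (Projectivization.mk ℝ v.1 v.2) = Projectivization.mk ℝ (S v.1) h1' :=
        projMap_mk S v.1 v.2 h1'
      have hmem : (⟨S v.1, h1'⟩ : {v : V // v ≠ 0}) ∈ Subtype.val ⁻¹' O := by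
        rw [hOeq]
        show Projectivization.mk' ℝ ⟨S v.1, h1'⟩ ∈ W
        rw [Projectivization.mk'_eq_mk, ← this]
        exact h2
      exact hmem
    · rintro ⟨h1, h2⟩
      have h1' : S ((Projectivization.mk ℝ v.1 v.2).rep) ≠ 0 :=
        fun h0 => h1 ((rep_zero_iff S v.1 v.2).1 h0)
      refine ⟨h1', ?_⟩
      show projMap S (Projectivization.mk ℝ v.1 v.2) ∈ W
      rw [projMap_mk S v.1 v.2 h1]
      have : (⟨S v.1, h1⟩ : {v : V // v ≠ 0}) ∈ Subtype.val ⁻¹' O := h2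
      rw [hOeq] at this
      exact this
  rw [this]
  exact ((isOpen_compl_singleton.inter hO).preimage S.continuous).preimage continuous_subtype_val

lemma isCompact_univ_proj [FiniteDimensional ℝ V] :
    IsCompact (Set.univ : Set (ℙ ℝ V)) := by
  have : ProperSpace V := FiniteDimensional.proper ℝ V
  set m : Metric.sphere (0 : V) 1 → ℙ ℝ V := fun v =>
    Projectivization.mk ℝ v.1 (by
      have := v.2
      rw [mem_sphere_zero_iff_norm] at this
      intro h0
      rw [h0] at this
      simp at this) with hm
  have hmc : Continuous m := by
    apply q_continuous.comp
    exact Continuous.subtype_mk continuous_subtype_val _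
  have hsurj : Set.univ ⊆ Set.range m := by
    intro x _
    have hx : x.rep ≠ 0 := x.rep_nonzero
    have hnorm : ‖(‖x.rep‖⁻¹ • x.rep : V)‖ = 1 := by
      rw [norm_smul, norm_inv, norm_norm, inv_mul_cancel₀ (norm_ne_zero_iff.2 hx)]
    refine ⟨⟨‖x.rep‖⁻¹ • x.rep, by rwa [mem_sphere_zero_iff_norm]⟩, ?_⟩
    show Projectivization.mk ℝ _ _ = x
    conv_rhs => rw [← x.mk_rep]
    exact (Projectivization.mk_eq_mk_iff' ℝ _ _ _ _).2 ⟨‖x.rep‖⁻¹, rfl⟩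
  have : Set.univ = Set.range m := le_antisymm hsurj (Set.subset_univ _)
  rw [this]
  exact isCompact_range hmc

/-- If `T_n → T` in `End(V)`, `T ≠ 0` and `ν(ℙ(ker T)) = 0`, then the pushforward
measures `(T_n)_* ν` converge weakly to `T_* ν`: for every continuous
`f : ℙ(V) → ℝ`, `∫ f d(T_n)_*ν → ∫ f dT_*ν`, where `T_*ν` is the pushforward under
the induced map of the restriction of `ν` to the complement of `ℙ(ker T)`. -/
theorem stmt_6 [FiniteDimensional ℝ V] (ν : Measure (ℙ ℝ V)) [IsProbabilityMeasure ν]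
    (Tn : ℕ → V →L[ℝ] V) (T : V →L[ℝ] V) (hT : T ≠ 0)
    (hlim : Tendsto Tn atTop (nhds T))
    (hker : ν {x : ℙ ℝ V | T x.rep = 0} = 0) :
    ∀ f : ℙ ℝ V → ℝ, Continuous f →
      Tendsto (fun n => ∫ x in {x : ℙ ℝ V | Tn n x.rep ≠ 0}, f (projMap (Tn n) x) ∂ν)
        atTop (nhds (∫ x in {x : ℙ ℝ V | T x.rep ≠ 0}, f (projMap T x) ∂ν)) := by
  intro f hf
  obtain ⟨C, hC⟩ := isCompact_univ_proj.exists_bound_of_continuousOn hf.continuousOn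
  set F : ℕ → ℙ ℝ V → ℝ := fun n =>
    Set.indicator {x : ℙ ℝ V | Tn n x.rep ≠ 0} (fun x => f (projMap (Tn n) x)) with hF
  set Flim : ℙ ℝ V → ℝ :=
    Set.indicator {x : ℙ ℝ V | T x.rep ≠ 0} (fun x => f (projMap T x)) with hFlim
  have hmeasU : ∀ S : V →L[ℝ] V, MeasurableSet {x : ℙ ℝ V | S x.rep ≠ 0} := fun S =>
    (isOpen_U S).measurableSet
  have hFm : ∀ n, AEStronglyMeasurable (F n) ν := by
    intro n
    rw [hF, aestronglyMeasurable_indicator_iff (hmeasU (Tn n))]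
    exact ((hf.comp_continuousOn (continuousOn_projMap (Tn n))).aestronglyMeasurable
      (hmeasU (Tn n)))
  have hbound : ∀ n, ∀ᵐ x ∂ν, ‖F n x‖ ≤ C := by
    intro n
    refine Eventually.of_forall fun x => ?_
    rw [hF]
    calc ‖Set.indicator {x : ℙ ℝ V | Tn n x.rep ≠ 0} (fun x => f (projMap (Tn n) x)) x‖
        ≤ ‖f (projMap (Tn n) x)‖ := norm_indicator_le_norm_self _ _
      _ ≤ C := hC _ (Set.mem_univ _)
  have hboundint : Integrable (fun _ : ℙ ℝ V => C) ν := integrable_const _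
  have hae : ∀ᵐ x ∂ν, T x.rep ≠ 0 := by
    have heq : {x : ℙ ℝ V | ¬T x.rep ≠ 0} = {x : ℙ ℝ V | T x.rep = 0} := by
      ext x; simp
    exact (MeasureTheory.ae_iff).2 (by rw [heq]; exact hker)
  have hlimpt : ∀ᵐ x ∂ν, Tendsto (fun n => F n x) atTop (nhds (Flim x)) := by
    filter_upwards [hae] with x hx
    -- 1. eventually Tn n x.rep ≠ 0
    have h1 : Tendsto (fun n => Tn n x.rep) atTop (nhds (T x.rep)) := by
      have : Continuous fun S : V →L[ℝ] V => S x.rep :=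
        (ContinuousLinearMap.apply ℝ V x.rep).continuous
      exact (this.tendsto T).comp hlim
    have hev : ∀ᶠ n in atTop, Tn n x.rep ≠ 0 := h1.eventually_ne hx
    -- 2. value of Flim
    have hFlimx : Flim x = f (projMap T x) := by
      rw [hFlim, Set.indicator_of_mem (show x ∈ {x : ℙ ℝ V | T x.rep ≠ 0} from hx)]
    -- 3. tendsto of projMap values
    have hproj : Tendsto (fun n => projMap (Tn n) x) atTop (nhds (projMap T x)) := by
      have hTx : projMap T x = Projectivization.mk' ℝ ⟨T x.rep, hx⟩ := by
        rw [projMap, dif_pos hx, Projectivization.mk'_eq_mk]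
      rw [hTx]
      intro W hW
      have hqW : (Projectivization.mk' ℝ) ⁻¹' W ∈ nhds (⟨T x.rep, hx⟩ : {v : V // v ≠ 0}) :=
        (q_continuous.continuousAt) hW
      rw [nhds_subtype_eq_comap, mem_comap] at hqW
      obtain ⟨O, hO, hsub⟩ := hqW
      have h2 : ∀ᶠ n in atTop, Tn n x.rep ∈ O := h1 hO
      rw [Filter.mem_map]
      filter_upwards [h2, hev] with n hn hne
      have : projMap (Tn n) x = Projectivization.mk' ℝ ⟨Tn n x.rep, hne⟩ := by
        rw [projMap, dif_pos hne, Projectivization.mk'_eq_mk]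
      rw [Set.mem_preimage, this]
      exact hsub hn
    rw [hFlimx]
    have hcong : (fun n => f (projMap (Tn n) x)) =ᶠ[atTop] fun n => F n x := by
      filter_upwards [hev] with n hn
      exact (Set.indicator_of_mem (show x ∈ {x : ℙ ℝ V | Tn n x.rep ≠ 0} from hn) (fun x => f (projMap (Tn n) x))).symm
    exact Tendsto.congr' hcong ((hf.tendsto _).comp hproj)
  have key := tendsto_integral_of_dominated_convergence (μ := ν) (F := F) (f := Flim)
    (fun _ => C) hFm hboundint hbound hlimpt
  have e1 : ∀ n, ∫ x, F n x ∂ν = ∫ x in {x : ℙ ℝ V | Tn n x.rep ≠ 0}, f (projMap (Tn n) x) ∂ν :=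
    fun n => integral_indicator (hmeasU (Tn n))
  have e2 : ∫ x, Flim x ∂ν = ∫ x in {x : ℙ ℝ V | T x.rep ≠ 0}, f (projMap T x) ∂ν :=
    integral_indicator (hmeasU T)
  rw [← e2]
  exact key.congr e1

end
end

section
/- Let Γ be a countable set and φ, φ₁, φ₂ : Γ → [0,∞) functions with finite critical exponents δ^φ, δ^{φ₁}, δ^{φ₂} (abscissas of convergence of the respective Poincaré series), with δ^{φ₁}, δ^{φ₂} > 0. Suppose there exist c₁, c₂ > 0 with φ(γ) ≥ c₁·φ₁(γ) + c₂·φ₂(γ) for all γ ∈ Γ. Then δ^φ ≤ 1 / ( c₁/δ^{φ₁} + c₂/δ^{φ₂} ). -/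
private lemma summable_of_gt_sInf {Γ : Type*} (ψ : Γ → ℝ) (hψ : ∀ γ, 0 ≤ ψ γ)
    (hfin : ∃ s, 0 < s ∧ Summable fun γ => Real.exp (-s * ψ γ))
    {u : ℝ} (hu : sInf {s : ℝ | 0 < s ∧ Summable fun γ => Real.exp (-s * ψ γ)} < u) :
    Summable fun γ => Real.exp (-u * ψ γ) := by
  have hne : ({s : ℝ | 0 < s ∧ Summable fun γ => Real.exp (-s * ψ γ)}).Nonempty := hfin
  have hbdd : BddBelow {s : ℝ | 0 < s ∧ Summable fun γ => Real.exp (-s * ψ γ)} :=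
    ⟨0, fun x hx => hx.1.le⟩
  obtain ⟨s, ⟨hs0, hsum⟩, hsu⟩ := (csInf_lt_iff hbdd hne).mp hu
  exact Summable.of_nonneg_of_le (fun γ => (Real.exp_pos _).le)
    (fun γ => Real.exp_le_exp.mpr (by nlinarith [hψ γ])) hsum

private lemma main_aux {Γ : Type*} (φ φ₁ φ₂ : Γ → ℝ)
    (hφ : ∀ γ, 0 ≤ φ γ) (h1 : ∀ γ, 0 ≤ φ₁ γ) (h2 : ∀ γ, 0 ≤ φ₂ γ)
    (c₁ c₂ : ℝ) (hc₁ : 0 < c₁) (hc₂ : 0 < c₂)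
    (hdom : ∀ γ, c₁ * φ₁ γ + c₂ * φ₂ γ ≤ φ γ)
    (δ₁ δ₂ : ℝ) (hpos1 : 0 < δ₁) (hpos2 : 0 < δ₂)
    (H1 : ∀ u, δ₁ < u → Summable fun γ => Real.exp (-u * φ₁ γ))
    (H2 : ∀ v, δ₂ < v → Summable fun γ => Real.exp (-v * φ₂ γ)) :
    sInf {s : ℝ | 0 < s ∧ Summable fun γ => Real.exp (-s * φ γ)}
      ≤ 1 / (c₁ / δ₁ + c₂ / δ₂) := by
  set D := c₁ / δ₁ + c₂ / δ₂ with hD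
  have hDpos : 0 < D := add_pos (div_pos hc₁ hpos1) (div_pos hc₂ hpos2)
  refine le_of_forall_gt_imp_ge_of_dense fun s hs => ?_
  have hs0 : 0 < s := lt_trans (one_div_pos.mpr hDpos) hs
  have hsD : 1 < s * D := by
    rw [one_div] at hs
    calc 1 = D⁻¹ * D := by field_simp
    _ < s * D := by gcongr
  set t := (c₁ / δ₁) / D with ht
  have ht0 : 0 < t := div_pos (div_pos hc₁ hpos1) hDpos
  have ht1 : 1 - t = (c₂ / δ₂) / D := by rw [ht, hD]; field_simp; ring
  have ht1' : 0 ≤ 1 - t := by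
    rw [ht1]; exact div_nonneg (div_nonneg hc₂.le hpos2.le) hDpos.le
  set u := s * D * δ₁ with hu
  set v := s * D * δ₂ with hv
  have hu1 : δ₁ < u := by nlinarith
  have hv2 : δ₂ < v := by nlinarith
  have hsum1 : Summable fun γ => Real.exp (-u * φ₁ γ) := H1 u hu1
  have hsum2 : Summable fun γ => Real.exp (-v * φ₂ γ) := H2 v hv2
  have htu : t * u = s * c₁ := by rw [ht, hu]; field_simp
  have htv : (1 - t) * v = s * c₂ := by rw [ht1, hv]; field_simp
  have hmem : Summable fun γ => Real.exp (-s * φ γ) := by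
    refine Summable.of_nonneg_of_le (fun γ => (Real.exp_pos _).le)
      (f := fun γ => t * Real.exp (-u * φ₁ γ) + (1 - t) * Real.exp (-v * φ₂ γ))
      (fun γ => ?_) ((hsum1.mul_left t).add (hsum2.mul_left (1 - t)))
    · 
      have key : Real.exp (-u * φ₁ γ) ^ t * Real.exp (-v * φ₂ γ) ^ (1 - t) ≤
          t * Real.exp (-u * φ₁ γ) + (1 - t) * Real.exp (-v * φ₂ γ) :=
        Real.geom_mean_le_arith_mean2_weighted ht0.le ht1' (Real.exp_pos _).le
          (Real.exp_pos _).le (by ring)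
      refine le_trans ?_ key
      rw [← Real.exp_mul, ← Real.exp_mul, ← Real.exp_add, Real.exp_le_exp]
      have := hdom γ
      nlinarith [h1 γ, h2 γ, hφ γ]
  exact csInf_le ⟨0, fun x hx => hx.1.le⟩ ⟨hs0, hmem⟩

/-- Convexity bound for critical exponents: if `φ ≥ c₁ φ₁ + c₂ φ₂` with `c₁, c₂ > 0`,
and the critical exponents `δ^{φ₁}, δ^{φ₂}` are finite and positive, then
`δ^φ ≤ 1 / (c₁/δ^{φ₁} + c₂/δ^{φ₂})`, where `δ^ψ = inf{s > 0 : ∑ e^{-s ψ} < ∞}`. -/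
theorem stmt_7 {Γ : Type*} [Countable Γ] (φ φ₁ φ₂ : Γ → ℝ)
    (hφ : ∀ γ, 0 ≤ φ γ) (h1 : ∀ γ, 0 ≤ φ₁ γ) (h2 : ∀ γ, 0 ≤ φ₂ γ)
    (c₁ c₂ : ℝ) (hc₁ : 0 < c₁) (hc₂ : 0 < c₂)
    (hdom : ∀ γ, c₁ * φ₁ γ + c₂ * φ₂ γ ≤ φ γ)
    (hfin : ∃ s, 0 < s ∧ Summable fun γ => Real.exp (-s * φ γ))
    (hfin1 : ∃ s, 0 < s ∧ Summable fun γ => Real.exp (-s * φ₁ γ))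
    (hfin2 : ∃ s, 0 < s ∧ Summable fun γ => Real.exp (-s * φ₂ γ))
    (hpos1 : 0 < sInf {s : ℝ | 0 < s ∧ Summable fun γ => Real.exp (-s * φ₁ γ)})
    (hpos2 : 0 < sInf {s : ℝ | 0 < s ∧ Summable fun γ => Real.exp (-s * φ₂ γ)}) :
    sInf {s : ℝ | 0 < s ∧ Summable fun γ => Real.exp (-s * φ γ)}
      ≤ 1 / (c₁ / sInf {s : ℝ | 0 < s ∧ Summable fun γ => Real.exp (-s * φ₁ γ)}
           + c₂ / sInf {s : ℝ | 0 < s ∧ Summable fun γ => Real.exp (-s * φ₂ γ)}) := by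
  exact main_aux φ φ₁ φ₂ hφ h1 h2 c₁ c₂ hc₁ hc₂ hdom _ _ hpos1 hpos2
    (fun u hu => summable_of_gt_sInf φ₁ h1 hfin1 hu)
    (fun v hv => summable_of_gt_sInf φ₂ h2 hfin2 hv)
end
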